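/- arXiv:2006.05819 — 2 statements merged into one kernel-verified Lean document; each statement's English description precedes it below -/
import Mathlib

section
/- For k > 0 and the Gaussian source R(x₁) = exp(-x₁²), the potential V(x) = ∫_{-∞}^{∞} exp(-x₁²)·(1/(2k))·exp(-k|x - x₁|) dx₁ satisfies V(x) = (√π/(4k))·[ e^{-kx + k²/4}(1 + erf(x - k/2)) + e^{kx + k²/4}(1 - erf(x + k/2)) ]. -/
open MeasureTheory Real Set

/-- Shifted Gaussian is integrable. -/
lemma gauss_shift_integrable (c : ℝ) :
    Integrable (fun t : ℝ => Real.exp (-(t - c) ^ 2)) := by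
  have h : Integrable (fun t : ℝ => Real.exp (-1 * t ^ 2)) := integrable_exp_neg_mul_sq one_pos
  have := h.comp_sub_right c
  simpa [neg_one_mul] using this

/-- Translation of Iic integrals. -/
lemma integral_Iic_shift (f : ℝ → ℝ) (a c : ℝ) :
    ∫ t in Iic a, f (t - c) = ∫ t in Iic (a - c), f t := by
  have h₁ : MeasurePreserving (fun t : ℝ => t - c) volume volume :=
    measurePreserving_sub_right volume c
  have h₂ : MeasurableEmbedding (fun t : ℝ => t - c) :=
    (MeasurableEquiv.subRight c).measurableEmbedding
  have := h₁.setIntegral_preimage_emb h₂ f (Iic (a - c))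
  have hpre : (fun t : ℝ => t - c) ⁻¹' Iic (a - c) = Iic a := by
    ext t; simp [sub_le_sub_iff_right]
  rwa [hpre] at this

lemma integral_Iic_zero_gauss : ∫ t in Iic (0:ℝ), Real.exp (-t ^ 2) = Real.sqrt Real.pi / 2 := by
  have hint : Integrable (fun t : ℝ => Real.exp (-t ^ 2)) := by
    simpa [neg_one_mul] using integrable_exp_neg_mul_sq (one_pos)
  have hsym : ∫ t in Iic (0:ℝ), Real.exp (-t ^ 2)
      = ∫ t in Ioi (0:ℝ), Real.exp (-t ^ 2) := by
    rw [← neg_zero, ← integral_comp_neg_Ioi]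
    simp
  have hsplit : (∫ t in Iic (0:ℝ), Real.exp (-t ^ 2))
      + ∫ t in Ioi (0:ℝ), Real.exp (-t ^ 2) = ∫ t : ℝ, Real.exp (-t ^ 2) := by
    rw [← setIntegral_union (by simp [disjoint_left]) measurableSet_Ioi
      hint.integrableOn hint.integrableOn, Iic_union_Ioi, setIntegral_univ]
  have htot : ∫ t : ℝ, Real.exp (-t ^ 2) = Real.sqrt Real.pi := by
    simpa [neg_one_mul] using integral_gaussian 1
  rw [hsym] at hsplit ⊢
  linarith [hsplit, htot]

/-- Key: Iic integral of shifted Gaussian. -/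
lemma integral_Iic_gauss (a c : ℝ) :
    ∫ t in Iic a, Real.exp (-(t - c) ^ 2)
      = Real.sqrt Real.pi / 2 + ∫ t in (0:ℝ)..(a - c), Real.exp (-t ^ 2) := by
  rw [integral_Iic_shift (fun t => Real.exp (-t ^ 2)) a c]
  have hint : Integrable (fun t : ℝ => Real.exp (-t ^ 2)) := by
    simpa [neg_one_mul] using integrable_exp_neg_mul_sq (one_pos)
  have := intervalIntegral.integral_Iic_sub_Iic (f := fun t : ℝ => Real.exp (-t ^ 2))
    (a := (0:ℝ)) (b := a - c) (μ := volume) hint.integrableOn hint.integrableOn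
  rw [integral_Iic_zero_gauss] at this
  linarith [this]

theorem stmt_12 (k : ℝ) (hk : 0 < k) (erf V : ℝ → ℝ)
    (herf : ∀ u, erf u = (2 / Real.sqrt Real.pi) * ∫ t in (0:ℝ)..u, Real.exp (-t ^ 2))
    (hV : ∀ x, V x = ∫ x₁ : ℝ, Real.exp (-x₁ ^ 2) * Real.exp (-k * |x - x₁|) / (2 * k)) :
    ∀ x : ℝ, V x = (Real.sqrt Real.pi / (4 * k)) *
      (Real.exp (-(k * x) + k ^ 2 / 4) * (1 + erf (x - k / 2)) +
       Real.exp (k * x + k ^ 2 / 4) * (1 - erf (x + k / 2))) := by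
  intro x
  have hπ : (0:ℝ) < Real.sqrt Real.pi := Real.sqrt_pos.mpr Real.pi_pos
  set g : ℝ → ℝ := fun x₁ => Real.exp (-x₁ ^ 2) * Real.exp (-k * |x - x₁|) / (2 * k) with hg
  -- constants
  set C1 : ℝ := Real.exp (-(k * x) + k ^ 2 / 4) / (2 * k) with hC1
  set C2 : ℝ := Real.exp (k * x + k ^ 2 / 4) / (2 * k) with hC2
  -- on Iic x
  have heq1 : ∀ x₁ ∈ Iic x, g x₁ = C1 * Real.exp (-(x₁ - k / 2) ^ 2) := by
    intro x₁ hx₁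
    simp only [mem_Iic] at hx₁
    have h : Real.exp (-x₁ ^ 2) * Real.exp (-k * |x - x₁|)
        = Real.exp (-(k * x) + k ^ 2 / 4) * Real.exp (-(x₁ - k / 2) ^ 2) := by
      rw [abs_of_nonneg (by linarith), ← Real.exp_add, ← Real.exp_add]
      congr 1; ring
    simp only [hg, hC1]
    rw [h]; ring
  have heq2 : ∀ x₁ ∈ Ioi x, g x₁ = C2 * Real.exp (-(x₁ + k / 2) ^ 2) := by
    intro x₁ hx₁
    simp only [mem_Ioi] at hx₁
    have h : Real.exp (-x₁ ^ 2) * Real.exp (-k * |x - x₁|)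
        = Real.exp (k * x + k ^ 2 / 4) * Real.exp (-(x₁ + k / 2) ^ 2) := by
      rw [abs_of_nonpos (by linarith), ← Real.exp_add, ← Real.exp_add]
      congr 1; ring
    simp only [hg, hC2]
    rw [h]; ring
  have hint1 : IntegrableOn g (Iic x) := by
    apply (IntegrableOn.congr_fun _ (fun x₁ hx₁ => (heq1 x₁ hx₁).symm) measurableSet_Iic)
    exact ((gauss_shift_integrable (k/2)).const_mul C1).integrableOn
  have hint2 : IntegrableOn g (Ioi x) := by
    apply (IntegrableOn.congr_fun _ (fun x₁ hx₁ => (heq2 x₁ hx₁).symm) measurableSet_Ioi)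
    have := ((gauss_shift_integrable (-(k/2))).const_mul C2).integrableOn (s := Ioi x)
    simpa [sub_neg_eq_add] using this
  have hsplit : V x = (∫ x₁ in Iic x, g x₁) + ∫ x₁ in Ioi x, g x₁ := by
    rw [hV x, ← setIntegral_univ, ← Iic_union_Ioi (a := x),
      setIntegral_union (by simp [disjoint_left]) measurableSet_Ioi hint1 hint2]
  -- first piece
  have hI1 : ∫ x₁ in Iic x, g x₁
      = C1 * (Real.sqrt Real.pi / 2 + ∫ t in (0:ℝ)..(x - k/2), Real.exp (-t ^ 2)) := by
    rw [setIntegral_congr_fun measurableSet_Iic heq1, integral_const_mul,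
      integral_Iic_gauss x (k/2)]
  -- second piece
  have hI2 : ∫ x₁ in Ioi x, g x₁
      = C2 * (Real.sqrt Real.pi / 2 - ∫ t in (0:ℝ)..(x + k/2), Real.exp (-t ^ 2)) := by
    rw [setIntegral_congr_fun measurableSet_Ioi heq2, integral_const_mul]
    have hneg : ∫ x₁ in Ioi x, Real.exp (-(x₁ + k / 2) ^ 2)
        = ∫ x₁ in Iic (-x), Real.exp (-(x₁ - k / 2) ^ 2) := by
      rw [← integral_comp_neg_Ioi]
      congr 1; ext t; ring_nf
    rw [hneg, integral_Iic_gauss (-x) (k/2)]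
    have hodd : ∫ t in (0:ℝ)..(-x - k/2), Real.exp (-t ^ 2)
        = - ∫ t in (0:ℝ)..(x + k/2), Real.exp (-t ^ 2) := by
      have := intervalIntegral.integral_comp_neg (a := (0:ℝ)) (b := -x - k/2)
        (fun t => Real.exp (-t ^ 2))
      simp only [neg_sub, neg_zero, neg_neg] at this
      rw [show (∫ t in (0:ℝ)..(-x - k/2), Real.exp (-t ^ 2))
          = ∫ t in (0:ℝ)..(-x - k/2), Real.exp (-(-t) ^ 2) by simp, this,
        show k/2 - -x = x + k/2 by ring,
        intervalIntegral.integral_symm]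
    rw [hodd]; ring
  -- erf relation
  have herf' : ∀ u, (∫ t in (0:ℝ)..u, Real.exp (-t ^ 2)) = Real.sqrt Real.pi / 2 * erf u := by
    intro u
    rw [herf u]
    field_simp
  rw [hsplit, hI1, hI2, herf', herf', hC1, hC2]
  field_simp
  ring
end

section
/- For the step-function source R₁ = indicator of [-4, 8] and Green function tanh(|x - x₁|/√2), the potential V₁(x) = ∫_{-4}^{8} tanh(|x - x₁|/√2) dx₁ equals √2·log( (1/4)(e^{√2(x-8)} + 1)(e^{√2(x+4)} + 1) ) - 2(x - 2) for -4 ≤ x ≤ 8. -/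
/-!
Splitting `[a, b]` at `x` turns `∫ tanh (|x - t| / c) dt` into two integrals of `tanh (s / c)`
from `0`, and `c * log (cosh (s / c))` is an antiderivative of `tanh (s / c)`. The closed form
then comes from writing `cosh y = e^{-y} (e^{2y} + 1) / 2`.
-/

open Real intervalIntegral

theorem Real.continuous_tanh : Continuous tanh := by
  rw [show tanh = fun x => sinh x / cosh x from funext tanh_eq_sinh_div_cosh]
  exact continuous_sinh.div continuous_cosh fun x => (cosh_pos x).ne'

theorem Real.integral_tanh (a b : ℝ) : ∫ t in a..b, tanh t = log (cosh b) - log (cosh a) := by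
  refine integral_eq_sub_of_hasDerivAt (f := fun t => log (cosh t)) (fun t _ => ?_)
    (continuous_tanh.intervalIntegrable a b)
  simpa [tanh_eq_sinh_div_cosh] using (hasDerivAt_cosh t).log (cosh_pos t).ne'

theorem Real.log_cosh_eq (y : ℝ) : log (cosh y) = log ((exp (2 * y) + 1) / 2) - y := by
  have hcosh : cosh y = (exp (2 * y) + 1) / 2 * exp (-y) := by
    rw [cosh_eq, two_mul, exp_add, exp_neg]
    field_simp
  rw [hcosh, log_mul (by positivity) (exp_pos _).ne', log_exp, sub_eq_add_neg]

theorem integral_comp_abs_sub {f : ℝ → ℝ} (hf : Continuous f) {a b x : ℝ} (hax : a ≤ x)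
    (hxb : x ≤ b) :
    ∫ t in a..b, f |x - t| = (∫ s in 0..x - a, f s) + ∫ s in 0..b - x, f s := by
  have hint : ∀ u v, IntervalIntegrable (fun t => f |x - t|) MeasureTheory.volume u v :=
    fun u v => (hf.comp (continuous_const.sub continuous_id).abs).intervalIntegrable u v
  rw [← integral_add_adjacent_intervals (hint a x) (hint x b)]
  congr 1
  · rw [integral_congr (g := fun t => f (x - t)) fun t ht => ?_, integral_comp_sub_left, sub_self]
    rw [Set.uIcc_of_le hax] at ht
    simp only [abs_of_nonneg (sub_nonneg.2 ht.2)]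
  · rw [integral_congr (g := fun t => f (t - x)) fun t ht => ?_, integral_comp_sub_right, sub_self]
    rw [Set.uIcc_of_le hxb] at ht
    simp only [abs_sub_comm x t, abs_of_nonneg (sub_nonneg.2 ht.1)]

theorem integral_tanh_abs_sub_div {a b x c : ℝ} (hax : a ≤ x) (hxb : x ≤ b) (hc : c ≠ 0) :
    ∫ t in a..b, tanh (|x - t| / c) =
      c * log ((exp (2 * (x - b) / c) + 1) * (exp (2 * (x - a) / c) + 1) / 4)
        - (2 * x - a - b) := by
  rw [integral_comp_abs_sub (f := fun s => tanh (s / c))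
    (continuous_tanh.comp (continuous_id.div_const c)) hax hxb]
  simp only [integral_comp_div (fun s => tanh s) hc, integral_tanh, zero_div, cosh_zero, log_one,
    sub_zero, smul_eq_mul]
  rw [← cosh_neg ((b - x) / c), log_cosh_eq, log_cosh_eq]
  have hP : 0 < (exp (2 * (x - b) / c) + 1) / 2 := by positivity
  have hQ : 0 < (exp (2 * (x - a) / c) + 1) / 2 := by positivity
  rw [show 2 * ((x - a) / c) = 2 * (x - a) / c by ring,
    show 2 * -((b - x) / c) = 2 * (x - b) / c by ring,
    show (4 : ℝ) = 2 * 2 by norm_num, ← div_mul_div_comm, log_mul hP.ne' hQ.ne']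
  field_simp
  ring

theorem stmt_15 (V₁ : ℝ → ℝ)
    (hV : ∀ x, V₁ x = ∫ x₁ in Set.Icc (-4 : ℝ) 8, Real.tanh (|x - x₁| / Real.sqrt 2)) :
    ∀ x : ℝ, -4 ≤ x → x ≤ 8 →
      V₁ x = Real.sqrt 2 * Real.log
        ((1 / 4) * (Real.exp (Real.sqrt 2 * (x - 8)) + 1) *
          (Real.exp (Real.sqrt 2 * (x + 4)) + 1)) - 2 * (x - 2) := by
  intro x hx4 hx8
  have hdiv : ∀ y, 2 * y / √2 = √2 * y := fun y => by
    rw [div_eq_iff (by positivity), mul_assoc, mul_comm y, ← mul_assoc, mul_self_sqrt zero_le_two]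
  rw [hV, MeasureTheory.integral_Icc_eq_integral_Ioc, ← integral_of_le (by norm_num),
    integral_tanh_abs_sub_div hx4 hx8 (by positivity), hdiv, hdiv]
  ring_nf
end
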